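/- The union ∪_{j∈ℤ} V_j is dense in L²(ℚ_2, μ); equivalently, the ℂ-linear span of the set of functions { x ↦ φ(2^{-j} x − a) : j ∈ ℤ, a ∈ I_2 } is dense in L²(ℚ_2, μ). -/

import Mathlib

open MeasureTheory

/-- The refinable function: the indicator of `ℤ_2` inside `ℚ_[2]`. -/
noncomputable def phi2 : ℚ_[2] → ℂ :=
  Set.indicator {x : ℚ_[2] | ‖x‖ ≤ 1} 1

/-- The set `I_2` of fractional-part representatives of `ℚ_2/ℤ_2`. -/
def I2 : Set ℚ_[2] :=
  {a | ∃ γ m : ℕ, m < 2 ^ γ ∧ a = (m : ℚ_[2]) / (2 : ℚ_[2]) ^ γ}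

/-- The space `V_j`: the closed `ℂ`-linear span in `L²(ℚ_2, μ)` of the functions
`x ↦ φ(2^{-j} x − a)`, `a ∈ I_2`. -/
noncomputable def Vsp [MeasurableSpace ℚ_[2]] (μ : Measure ℚ_[2]) (j : ℤ) :
    Submodule ℂ (Lp ℂ 2 μ) :=
  (Submodule.span ℂ {f : Lp ℂ 2 μ | ∃ a ∈ I2,
    (f : ℚ_[2] → ℂ) =ᵐ[μ] fun x => phi2 ((2 : ℚ_[2]) ^ (-j) * x - a)}).topologicalClosure

/-!
The generators of `V_j` are the indicators of the closed balls of radius `2^{-j}`: every such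
ball has a centre in `2^j I_2`. Each ball of radius `2^{-j}` is the disjoint union of two balls of
radius `2^{-j-1}` (the refinement equation `φ x = φ (x/2) + φ ((x-1)/2)`, which holds because the
residue field of `ℤ_2` is `𝔽_2`), so the `V_j` increase. By regularity of Haar measure, a set of
finite measure lies, up to small measure, between a compact `K` and an open `U ⊇ K`; for small
enough radius, finitely many balls of that radius cover `K` inside `U`, and since balls of equal
radius are equal or disjoint, the indicator of their union lies in a single `V_j`. Indicators of
sets of finite measure span a dense subspace of `L²`.
-/

open Metric Filter
open scoped ENNReal symmDiff

lemma PadicInt.norm_lt_one_or_norm_sub_one_lt_one (z : ℤ_[2]) : ‖z‖ < 1 ∨ ‖z - 1‖ < 1 := by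
  obtain ⟨n, hn, hmem⟩ := PadicInt.exists_mem_range z
  rw [IsLocalRing.mem_maximalIdeal, PadicInt.mem_nonunits] at hmem
  interval_cases n
  · exact Or.inl (by simpa using hmem)
  · exact Or.inr (by simpa using hmem)

namespace Padic

lemma norm_two_eq_inv : ‖(2 : ℚ_[2])‖ = 2⁻¹ := by
  simpa using norm_p (p := 2)

lemma norm_lt_one_iff_le_inv_two (x : ℚ_[2]) : ‖x‖ < 1 ↔ ‖x‖ ≤ 2⁻¹ := by
  simpa using norm_lt_pow_iff_norm_le_pow_sub_one x 0

lemma norm_le_inv_two_or_norm_sub_one_le_inv_two {u : ℚ_[2]} (hu : ‖u‖ ≤ 1) :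
    ‖u‖ ≤ 2⁻¹ ∨ ‖u - 1‖ ≤ 2⁻¹ := by
  obtain ⟨z, rfl⟩ : ∃ z : ℤ_[2], (z : ℚ_[2]) = u := ⟨⟨u, hu⟩, rfl⟩
  have h := PadicInt.norm_lt_one_or_norm_sub_one_lt_one z
  rw [PadicInt.norm_def, PadicInt.norm_def, PadicInt.coe_sub, PadicInt.coe_one] at h
  simpa only [norm_lt_one_iff_le_inv_two] using h

lemma exists_norm_two_zpow_lt {δ : ℝ} (hδ : 0 < δ) : ∃ j : ℤ, ‖(2 : ℚ_[2]) ^ j‖ < δ := by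
  obtain ⟨n, hn⟩ := exists_pow_lt_of_lt_one hδ (by norm_num : (2⁻¹ : ℝ) < 1)
  exact ⟨n, by rwa [zpow_natCast, norm_pow, norm_two_eq_inv]⟩

end Padic

open Padic

lemma exists_mem_I2_norm_sub_le_one (y : ℚ_[2]) : ∃ a ∈ I2, ‖y - a‖ ≤ 1 := by
  obtain ⟨γ, hγ⟩ := pow_unbounded_of_one_lt ‖y‖ one_lt_two
  have h2γ : ‖(2 : ℚ_[2]) ^ γ‖ = (2 ^ γ)⁻¹ := by rw [norm_pow, norm_two_eq_inv, inv_pow]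
  have hz : ‖(2 : ℚ_[2]) ^ γ * y‖ ≤ 1 := by
    rw [norm_mul, h2γ, inv_mul_le_one₀ (by positivity)]
    exact hγ.le
  obtain ⟨z, hz⟩ : ∃ z : ℤ_[2], (z : ℚ_[2]) = 2 ^ γ * y := ⟨⟨_, hz⟩, rfl⟩
  refine ⟨(z.appr γ : ℚ_[2]) / 2 ^ γ, ⟨γ, _, z.appr_lt γ, rfl⟩, ?_⟩
  have happr := (PadicInt.norm_le_pow_iff_mem_span_pow _ γ).mpr (PadicInt.appr_spec γ z)
  rw [PadicInt.norm_def, PadicInt.coe_sub, PadicInt.coe_natCast, hz] at happr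
  have hsplit : y - (z.appr γ : ℚ_[2]) / 2 ^ γ =
      ((2 : ℚ_[2]) ^ γ)⁻¹ * ((2 : ℚ_[2]) ^ γ * y - z.appr γ) := by
    rw [mul_sub, ← mul_assoc, inv_mul_cancel₀ (pow_ne_zero γ two_ne_zero), one_mul,
      div_eq_inv_mul]
  rw [hsplit, norm_mul, norm_inv, h2γ, inv_inv, ← le_div_iff₀' (by positivity), one_div]
  simpa using happr

lemma div_two_mem_I2 {a : ℚ_[2]} (ha : a ∈ I2) : a / 2 ∈ I2 := by
  obtain ⟨γ, m, hm, rfl⟩ := ha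
  refine ⟨γ + 1, m, hm.trans (Nat.pow_lt_pow_succ one_lt_two), ?_⟩
  rw [pow_succ, div_div]

lemma add_one_div_two_mem_I2 {a : ℚ_[2]} (ha : a ∈ I2) : (a + 1) / 2 ∈ I2 := by
  obtain ⟨γ, m, hm, rfl⟩ := ha
  refine ⟨γ + 1, m + 2 ^ γ, by omega, ?_⟩
  have h2γ : (2 : ℚ_[2]) ^ γ ≠ 0 := pow_ne_zero γ two_ne_zero
  push_cast
  rw [pow_succ]
  field_simp

lemma phi2_eq_add (u : ℚ_[2]) : phi2 u = phi2 (u / 2) + phi2 ((u - 1) / 2) := by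
  have h_norm_div (v : ℚ_[2]) : ‖v / 2‖ ≤ 1 ↔ ‖v‖ ≤ 2⁻¹ := by
    rw [norm_div, norm_two_eq_inv, div_le_one (by norm_num)]
  simp only [phi2, Set.indicator_apply, Set.mem_ofPred_eq, Pi.one_apply, h_norm_div]
  by_cases hu : ‖u‖ ≤ 1
  · have hnot_both : ¬ (‖u‖ ≤ 2⁻¹ ∧ ‖u - 1‖ ≤ 2⁻¹) := by
      rintro ⟨h0, h1⟩
      have : ‖(1 : ℚ_[2])‖ ≤ 2⁻¹ := calc
        ‖(1 : ℚ_[2])‖ = ‖u + -(u - 1)‖ := by ring_nf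
        _ ≤ max ‖u‖ ‖-(u - 1)‖ := IsUltrametricDist.norm_add_le_max _ _
        _ ≤ 2⁻¹ := by rw [norm_neg]; exact max_le h0 h1
      norm_num at this
    rcases norm_le_inv_two_or_norm_sub_one_le_inv_two hu with h | h <;> simp_all
  · have h0 : ¬ ‖u‖ ≤ 2⁻¹ := fun h => hu (h.trans (by norm_num))
    have h1 : ¬ ‖u - 1‖ ≤ 2⁻¹ := fun h => hu <| by
      simpa using (IsUltrametricDist.norm_add_le_max (u - 1) 1).trans
        (max_le (h.trans (by norm_num)) (by simp))
    simp [hu, h0, h1]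

lemma exists_mem_I2_closedBall_eq (j : ℤ) (c : ℚ_[2]) :
    ∃ a ∈ I2, closedBall c ‖(2 : ℚ_[2]) ^ j‖ = closedBall (2 ^ j * a) ‖(2 : ℚ_[2]) ^ j‖ := by
  obtain ⟨a, ha, hca⟩ := exists_mem_I2_norm_sub_le_one ((2 : ℚ_[2]) ^ (-j) * c)
  refine ⟨a, ha, IsUltrametricDist.closedBall_eq_of_mem ?_⟩
  have hrw : c - 2 ^ j * a = (2 : ℚ_[2]) ^ j * ((2 : ℚ_[2]) ^ (-j) * c - a) := by
    rw [mul_sub, ← mul_assoc, ← zpow_add₀ two_ne_zero, add_neg_cancel, zpow_zero, one_mul]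
  rw [mem_closedBall', dist_eq_norm, hrw, norm_mul]
  exact mul_le_of_le_one_right (norm_nonneg _) hca

lemma phi2_zpow_mul_sub (j : ℤ) (a x : ℚ_[2]) :
    phi2 ((2 : ℚ_[2]) ^ (-j) * x - a) =
      (closedBall ((2 : ℚ_[2]) ^ j * a) ‖(2 : ℚ_[2]) ^ j‖).indicator 1 x := by
  have h2 : (2 : ℚ_[2]) ^ j ≠ 0 := zpow_ne_zero j two_ne_zero
  have hrw : (2 : ℚ_[2]) ^ (-j) * x - a = ((2 : ℚ_[2]) ^ j)⁻¹ * (x - 2 ^ j * a) := by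
    rw [zpow_neg, mul_sub, ← mul_assoc, inv_mul_cancel₀ h2, one_mul]
  have hmem : ‖(2 : ℚ_[2]) ^ (-j) * x - a‖ ≤ 1 ↔
      x ∈ closedBall ((2 : ℚ_[2]) ^ j * a) ‖(2 : ℚ_[2]) ^ j‖ := by
    rw [hrw, norm_mul, norm_inv, inv_mul_le_one₀ (norm_pos_iff.mpr h2), mem_closedBall,
      dist_eq_norm]
  classical
  simp only [phi2, Set.indicator_apply, Set.mem_ofPred_eq, Pi.one_apply]
  exact if_congr hmem rfl rfl

namespace MeasureTheory

variable {X E : Type*} [MeasurableSpace X] [NormedAddCommGroup E] {p : ℝ≥0∞} {μ : Measure X}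

lemma _root_.MeasurableSet.exists_measure_symmDiff_lt [TopologicalSpace X] [T2Space X]
    [OpensMeasurableSpace X] [μ.OuterRegular] [μ.InnerRegularCompactLTTop] {P : Set X → Prop}
    (hP : ∀ K U, IsCompact K → IsOpen U → K ⊆ U → ∃ t, K ⊆ t ∧ t ⊆ U ∧ P t)
    {s : Set X} (hs : MeasurableSet s) (hμs : μ s ≠ ∞) {ε : ℝ≥0∞} (hε : ε ≠ 0) :
    ∃ t, μ (t ∆ s) < ε ∧ P t := by
  have hε2 : ε / 2 ≠ 0 := ENNReal.div_ne_zero.mpr ⟨hε, ENNReal.ofNat_ne_top⟩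
  obtain ⟨U, hsU, hU, -, hUs⟩ := hs.exists_isOpen_sdiff_lt hμs hε2
  obtain ⟨K, hKs, hK, hsK⟩ := hs.exists_isCompact_sdiff_lt hμs hε2
  obtain ⟨t, hKt, htU, ht⟩ := hP K U hK hU (hKs.trans hsU)
  refine ⟨t, ?_, ht⟩
  calc μ (t ∆ s) ≤ μ ((U \ s) ∪ (s \ K)) :=
        measure_mono (Set.union_subset_union (Set.sdiff_subset_sdiff_left htU)
          (Set.sdiff_subset_sdiff_right hKt))
    _ ≤ μ (U \ s) + μ (s \ K) := measure_union_le _ _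
    _ < ε / 2 + ε / 2 := ENNReal.add_lt_add hUs hsK
    _ = ε := ENNReal.add_halves ε

theorem Lp.dense_of_exists_ae_eq_indicator [TopologicalSpace X] [T2Space X]
    [OpensMeasurableSpace X] [μ.OuterRegular] [μ.InnerRegularCompactLTTop] [Fact (1 ≤ p)]
    (hp : p ≠ ∞) (S : AddSubgroup (Lp E p μ))
    (hS : ∀ (c : E) (K U : Set X), IsCompact K → IsOpen U → K ⊆ U → ∃ t, K ⊆ t ∧ t ⊆ U ∧
      MeasurableSet t ∧ μ t ≠ ∞ ∧ ∃ f ∈ S, f =ᵐ[μ] t.indicator fun _ => c) :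
    Dense (S : Set (Lp E p μ)) := by
  intro f
  refine Lp.induction hp (· ∈ closure (S : Set (Lp E p μ))) (fun c s hs hμs => ?_)
    (fun _ _ _ _ _ hf hg => ?_) isClosed_closure f
  · have hε (n : ℕ) : (n : ℝ≥0∞)⁻¹ ≠ 0 := ENNReal.inv_ne_zero.mpr (ENNReal.natCast_ne_top n)
    choose t hts ht hμt g hgS hg using fun n =>
      hs.exists_measure_symmDiff_lt (hS c) hμs.ne (hε n)
    have hlim := tendsto_indicatorConstLp_set (c := c) (hs := hs) (hμs := hμs.ne) (ht := ht)
      (hμt := hμt) hp (tendsto_of_tendsto_of_tendsto_of_le_of_le tendsto_const_nhds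
        ENNReal.tendsto_inv_nat_nhds_zero (fun _ => bot_le) fun n => (hts n).le)
    rw [Lp.simpleFunc.coe_indicatorConst]
    refine mem_closure_of_tendsto hlim (Eventually.of_forall fun n => ?_)
    rw [show indicatorConstLp p (ht n) (hμt n) c = g n from
      Lp.ext (indicatorConstLp_coeFn.trans (hg n).symm)]
    exact hgS n
  · rw [← AddSubgroup.topologicalClosure_coe] at hf hg ⊢
    exact add_mem hf hg

lemma exists_mem_ae_eq_indicator_biUnion_closedBall [PseudoMetricSpace X] [IsUltrametricDist X]
    (S : AddSubgroup (Lp E p μ)) {r : ℝ} {c : E}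
    (hS : ∀ x, ∃ f ∈ S, f =ᵐ[μ] (closedBall x r).indicator fun _ => c) (t : Finset X) :
    ∃ f ∈ S, f =ᵐ[μ] (⋃ x ∈ t, closedBall x r).indicator fun _ => c := by
  classical
  induction t using Finset.induction_on with
  | empty =>
    refine ⟨0, zero_mem S, ?_⟩
    simp only [Finset.notMem_empty, Set.iUnion_of_empty, Set.iUnion_empty, Set.indicator_empty]
    exact Lp.coeFn_zero E p μ
  | insert x t hx ih =>
    obtain ⟨g, hgS, hg⟩ := ih
    rw [Finset.set_biUnion_insert]
    by_cases hsub : closedBall x r ⊆ ⋃ y ∈ t, closedBall y r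
    · rw [Set.union_eq_right.mpr hsub]
      exact ⟨g, hgS, hg⟩
    have hdisj : Disjoint (closedBall x r) (⋃ y ∈ t, closedBall y r) := by
      refine Set.disjoint_iUnion₂_right.mpr fun y hy => ?_
      refine (IsUltrametricDist.closedBall_eq_or_disjoint x y r).resolve_left fun h => hsub ?_
      exact h ▸ Set.subset_biUnion_of_mem (u := fun y => closedBall y r) hy
    obtain ⟨f, hfS, hf⟩ := hS x
    refine ⟨f + g, add_mem hfS hgS, ?_⟩
    filter_upwards [Lp.coeFn_add f g, hf, hg] with y hfg hfy hgy
    rw [hfg, Pi.add_apply, hfy, hgy, Set.indicator_union_of_disjoint hdisj]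

end MeasureTheory

section Vsp

variable [MeasurableSpace ℚ_[2]] (μ : Measure ℚ_[2])

lemma mem_Vsp_of_ae_eq {j : ℤ} {a : ℚ_[2]} (ha : a ∈ I2) {f : Lp ℂ 2 μ}
    (hf : f =ᵐ[μ] fun x => phi2 ((2 : ℚ_[2]) ^ (-j) * x - a)) : f ∈ Vsp μ j :=
  Submodule.le_topologicalClosure _ (Submodule.subset_span ⟨a, ha, hf⟩)

variable [BorelSpace ℚ_[2]] [IsFiniteMeasureOnCompacts μ]

lemma exists_Lp_ae_eq_phi2 (j : ℤ) (a : ℚ_[2]) :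
    ∃ f : Lp ℂ 2 μ, f =ᵐ[μ] fun x => phi2 ((2 : ℚ_[2]) ^ (-j) * x - a) := by
  have hball := indicatorConstLp_coeFn (p := 2) (μ := μ) (c := (1 : ℂ))
    (hs := measurableSet_closedBall (x := 2 ^ j * a) (ε := ‖(2 : ℚ_[2]) ^ j‖))
    (hμs := measure_closedBall_lt_top.ne)
  exact ⟨_, hball.trans (.of_forall fun x => (phi2_zpow_mul_sub j a x).symm)⟩

lemma exists_mem_Vsp_ae_eq_indicator_closedBall (j : ℤ) (c : ℚ_[2]) (z : ℂ) :
    ∃ f ∈ Vsp μ j, f =ᵐ[μ] (closedBall c ‖(2 : ℚ_[2]) ^ j‖).indicator fun _ => z := by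
  obtain ⟨a, ha, hball⟩ := exists_mem_I2_closedBall_eq j c
  obtain ⟨g, hg⟩ := exists_Lp_ae_eq_phi2 μ j a
  refine ⟨z • g, Submodule.smul_mem _ z (mem_Vsp_of_ae_eq μ ha hg), ?_⟩
  filter_upwards [Lp.coeFn_smul z g, hg] with x hzg hgx
  rw [hzg, Pi.smul_apply, hgx, phi2_zpow_mul_sub, ← hball]
  by_cases hx : x ∈ closedBall c ‖(2 : ℚ_[2]) ^ j‖
  · simp only [Set.indicator_of_mem hx, Pi.one_apply, smul_eq_mul, mul_one]
  · simp only [Set.indicator_of_notMem hx, smul_zero]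

lemma Vsp_monotone : Monotone (Vsp μ) := by
  refine monotone_int_of_le_succ fun j => Submodule.topologicalClosure_minimal _ ?_
    (Submodule.isClosed_topologicalClosure _)
  rw [Submodule.span_le]
  rintro f ⟨a, ha, hf⟩
  obtain ⟨g₀, hg₀⟩ := exists_Lp_ae_eq_phi2 μ (j + 1) (a / 2)
  obtain ⟨g₁, hg₁⟩ := exists_Lp_ae_eq_phi2 μ (j + 1) ((a + 1) / 2)
  have hfg : f = g₀ + g₁ := by
    refine Lp.ext ?_
    filter_upwards [hf, hg₀, hg₁, Lp.coeFn_add g₀ g₁] with x hfx hg₀x hg₁x hgx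
    have hscale : (2 : ℚ_[2]) ^ (-(j + 1)) = 2 ^ (-j) / 2 := by
      rw [neg_add, zpow_add₀ two_ne_zero, zpow_neg_one, div_eq_mul_inv]
    rw [hfx, hgx, Pi.add_apply, hg₀x, hg₁x, phi2_eq_add, hscale]
    congr 2 <;> ring
  rw [hfg]
  exact add_mem (mem_Vsp_of_ae_eq μ (div_two_mem_I2 ha) hg₀)
    (mem_Vsp_of_ae_eq μ (add_one_div_two_mem_I2 ha) hg₁)

end Vsp

theorem Vsp_union_dense_general [MeasurableSpace ℚ_[2]] [BorelSpace ℚ_[2]]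
    (μ : Measure ℚ_[2]) [μ.IsAddHaarMeasure] :
    Dense (⋃ j : ℤ, (Vsp μ j : Set (Lp ℂ 2 μ))) := by
  rw [← Submodule.coe_iSup_of_directed _ (Vsp_monotone μ).directed_le]
  refine Lp.dense_of_exists_ae_eq_indicator ENNReal.ofNat_ne_top (⨆ j, Vsp μ j).toAddSubgroup
    fun c K U hK hU hKU => ?_
  obtain ⟨δ, hδ, hKδU⟩ := hK.exists_cthickening_subset_open hU hKU
  obtain ⟨n, hn⟩ := exists_norm_two_zpow_lt hδ
  obtain ⟨t, htK, hKt⟩ := hK.elim_nhds_subcover (fun x => closedBall x ‖(2 : ℚ_[2]) ^ n‖)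
    fun x _ => closedBall_mem_nhds x (norm_pos_iff.mpr (zpow_ne_zero n two_ne_zero))
  obtain ⟨f, hfV, hf⟩ := exists_mem_ae_eq_indicator_biUnion_closedBall (Vsp μ n).toAddSubgroup
    (exists_mem_Vsp_ae_eq_indicator_closedBall μ n · c) t
  refine ⟨_, hKt, ?_, t.measurableSet_biUnion fun x _ => measurableSet_closedBall,
    (t.isCompact_biUnion fun x _ => isCompact_closedBall x _).measure_lt_top.ne,
    f, Submodule.mem_iSup_of_mem _ hfV, hf⟩
  exact (Set.iUnion₂_subset fun x hx =>
    (closedBall_subset_cthickening (htK x hx) _).trans (cthickening_mono hn.le K)).trans hKδU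

theorem Vsp_union_dense [MeasurableSpace ℚ_[2]] [BorelSpace ℚ_[2]]
    (μ : Measure ℚ_[2]) [μ.IsAddHaarMeasure]
    (hμ : μ {x : ℚ_[2] | ‖x‖ ≤ 1} = 1) :
    Dense (⋃ j : ℤ, (Vsp μ j : Set (Lp ℂ 2 μ))) :=
  Vsp_union_dense_general μ
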